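/- Let b : Σ₁ → ℝ^{[n]×S×Aⁿ} send σ₁ to the unique fixed point of T(·,σ₁), where T(v,σ₁)_{i,s₁,p₀} := max_{τ₁^i ∈ Σ₁^i} V₁(σ₁, τ₁^i, v)_{i,s₁,p₀}, and define the correspondence Γ(σ₁) := { τ₁ ∈ Σ₁ : b(σ₁) = V₁(σ₁, τ₁, b(σ₁)) }. Then: (a) Γ(σ₁) is nonempty for every σ₁ ∈ Σ₁; (b) Γ(σ₁) is convex for every σ₁; (c) Γ(σ₁) is closed in Σ₁ for every σ₁; and (d) Γ has a closed graph: if σ₁,ₖ → σ₁ and τ₁,ₖ → τ₁ in Σ₁ with τ₁,ₖ ∈ Γ(σ₁,ₖ) for every k, then τ₁ ∈ Γ(σ₁). -/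
import Mathlib


open Finset Filter

/-- A one-memory policy for a single firm. -/
def IsPolicy {ι S A : Type*} [Fintype A]
    (τ : (ι → A) → S → A → ℝ) : Prop :=
  (∀ p₀ s₁ a, 0 ≤ τ p₀ s₁ a) ∧ ∀ p₀ s₁, ∑ a, τ p₀ s₁ a = 1

/-- A transition kernel on states. -/
def IsKernel {ι S A : Type*} [Fintype S]
    (P : (ι → A) → S → S → ℝ) : Prop :=
  (∀ p s s', 0 ≤ P p s s') ∧ ∀ p s, ∑ s', P p s s' = 1

/-- The one-step value operator `V₁`. -/
def V1 {ι S A : Type*} [Fintype ι] [DecidableEq ι] [Fintype S] [Fintype A]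
    (P : (ι → A) → S → S → ℝ) (π : ι → (ι → A) → S → ℝ) (δ : ι → ℝ)
    (σ : ι → (ι → A) → S → A → ℝ) (τ : (ι → A) → S → A → ℝ)
    (v : ι → S → (ι → A) → ℝ) (i : ι) (s₁ : S) (p₀ : ι → A) : ℝ :=
  ∑ p₁ : ι → A,
    (τ p₀ s₁ (p₁ i) * ∏ j ∈ Finset.univ.erase i, σ j p₀ s₁ (p₁ j)) *
      (π i p₁ s₁ + δ i * ∑ s₂, P p₁ s₁ s₂ * v i s₂ p₁)

/-- The operator `T(v,σ)`. -/
noncomputable def Tmap {ι S A : Type*} [Fintype ι] [DecidableEq ι] [Fintype S] [Fintype A]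
    (P : (ι → A) → S → S → ℝ) (π : ι → (ι → A) → S → ℝ) (δ : ι → ℝ)
    (v : ι → S → (ι → A) → ℝ) (σ : ι → (ι → A) → S → A → ℝ) :
    ι → S → (ι → A) → ℝ :=
  fun i s₁ p₀ => sSup ((fun τ => V1 P π δ σ τ v i s₁ p₀) '' {τ | IsPolicy τ})

/-- The best-response correspondence `Γ`. -/
def Gamma {ι S A : Type*} [Fintype ι] [DecidableEq ι] [Fintype S] [Fintype A]
    (P : (ι → A) → S → S → ℝ) (π : ι → (ι → A) → S → ℝ) (δ : ι → ℝ)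
    (b : (ι → (ι → A) → S → A → ℝ) → (ι → S → (ι → A) → ℝ))
    (σ : ι → (ι → A) → S → A → ℝ) : Set (ι → (ι → A) → S → A → ℝ) :=
  {τ | (∀ j, IsPolicy (τ j)) ∧
    b σ = fun i s₁ p₀ => V1 P π δ σ (τ i) (b σ) i s₁ p₀}

section AuxGamma

set_option linter.unusedSectionVars false

variable {ι S A : Type*} [Fintype ι] [DecidableEq ι] [Fintype S] [Fintype A] [DecidableEq A]
variable (P : (ι → A) → S → S → ℝ) (π : ι → (ι → A) → S → ℝ) (δ : ι → ℝ)

/-- The grouped coefficient `G`. -/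
noncomputable def Gfun (σ : ι → (ι → A) → S → A → ℝ) (v : ι → S → (ι → A) → ℝ)
    (i : ι) (s₁ : S) (p₀ : ι → A) (a : A) : ℝ :=
  ∑ p₁ ∈ Finset.univ.filter (fun p₁ : ι → A => p₁ i = a),
    (∏ j ∈ Finset.univ.erase i, σ j p₀ s₁ (p₁ j)) *
      (π i p₁ s₁ + δ i * ∑ s₂, P p₁ s₁ s₂ * v i s₂ p₁)

lemma V1_eq_sum (σ : ι → (ι → A) → S → A → ℝ) (τ : (ι → A) → S → A → ℝ)
    (v : ι → S → (ι → A) → ℝ) (i : ι) (s₁ : S) (p₀ : ι → A) :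
    V1 P π δ σ τ v i s₁ p₀ = ∑ a, τ p₀ s₁ a * Gfun P π δ σ v i s₁ p₀ a := by
  calc V1 P π δ σ τ v i s₁ p₀
      = ∑ p₁ : ι → A, τ p₀ s₁ (p₁ i) *
          ((∏ j ∈ Finset.univ.erase i, σ j p₀ s₁ (p₁ j)) *
            (π i p₁ s₁ + δ i * ∑ s₂, P p₁ s₁ s₂ * v i s₂ p₁)) := by
        unfold V1; exact Finset.sum_congr rfl fun p₁ _ => by ring
    _ = ∑ a, ∑ p₁ ∈ Finset.univ.filter (fun p₁ : ι → A => p₁ i = a),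
          τ p₀ s₁ (p₁ i) *
          ((∏ j ∈ Finset.univ.erase i, σ j p₀ s₁ (p₁ j)) *
            (π i p₁ s₁ + δ i * ∑ s₂, P p₁ s₁ s₂ * v i s₂ p₁)) :=
        (Finset.sum_fiberwise _ _ _).symm
    _ = ∑ a, τ p₀ s₁ a * Gfun P π δ σ v i s₁ p₀ a := by
        refine Finset.sum_congr rfl fun a _ => ?_
        rw [Gfun, Finset.mul_sum]
        exact Finset.sum_congr rfl fun p₁ hp₁ => by
          rw [(Finset.mem_filter.mp hp₁).2]

lemma dirac_policy (a₀ : A) :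
    IsPolicy (fun (_ : ι → A) (_ : S) a => if a = a₀ then (1:ℝ) else 0) := by
  constructor
  · intro _ _ a; dsimp only; split <;> norm_num
  · intro _ _; simp

lemma dirac_sum (g : A → ℝ) (a₀ : A) :
    ∑ a, (if a = a₀ then (1:ℝ) else 0) * g a = g a₀ := by
  simp [ite_mul]

lemma Tmap_eq_sup' [Nonempty A] (σ : ι → (ι → A) → S → A → ℝ) (v : ι → S → (ι → A) → ℝ)
    (i : ι) (s₁ : S) (p₀ : ι → A) :
    Tmap P π δ v σ i s₁ p₀ =
      Finset.univ.sup' Finset.univ_nonempty (Gfun P π δ σ v i s₁ p₀) := by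
  set M := Finset.univ.sup' Finset.univ_nonempty (Gfun P π δ σ v i s₁ p₀) with hM
  have hub : ∀ x ∈ (fun τ => V1 P π δ σ τ v i s₁ p₀) '' {τ | IsPolicy τ}, x ≤ M := by
    rintro x ⟨τ, hτ, rfl⟩
    dsimp only
    rw [V1_eq_sum]
    calc ∑ a, τ p₀ s₁ a * Gfun P π δ σ v i s₁ p₀ a
        ≤ ∑ a, τ p₀ s₁ a * M := Finset.sum_le_sum fun a _ =>
          mul_le_mul_of_nonneg_left (Finset.le_sup' _ (Finset.mem_univ a)) (hτ.1 _ _ _)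
      _ = M := by rw [← Finset.sum_mul, hτ.2, one_mul]
  obtain ⟨a₀, _, ha₀⟩ := Finset.exists_mem_eq_sup' (Finset.univ_nonempty (α := A))
    (Gfun P π δ σ v i s₁ p₀)
  have hmem : M ∈ (fun τ => V1 P π δ σ τ v i s₁ p₀) '' {τ | IsPolicy τ} := by
    refine ⟨fun _ _ a => if a = a₀ then (1:ℝ) else 0, dirac_policy a₀, ?_⟩
    dsimp only
    rw [V1_eq_sum, dirac_sum, ← ha₀]
  exact le_antisymm (csSup_le ⟨M, hmem⟩ hub) (le_csSup ⟨M, hub⟩ hmem)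

/-- the coefficients of the other firms sum to one over a fiber -/
lemma fiber_sum (σ : ι → (ι → A) → S → A → ℝ) (hσ : ∀ j, IsPolicy (σ j))
    (i : ι) (a : A) (p₀ : ι → A) (s₁ : S) :
    ∑ p₁ ∈ Finset.univ.filter (fun p₁ : ι → A => p₁ i = a),
      ∏ j ∈ Finset.univ.erase i, σ j p₀ s₁ (p₁ j) = 1 := by
  set f : ι → A → ℝ := fun j x => if j = i then (if x = a then 1 else 0) else σ j p₀ s₁ x with hf
  have h1 : ∀ p₁ : ι → A, ∏ j, f j (p₁ j)
      = (if p₁ i = a then (1:ℝ) else 0) * ∏ j ∈ Finset.univ.erase i, σ j p₀ s₁ (p₁ j) := by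
    intro p₁
    rw [← Finset.mul_prod_erase Finset.univ _ (Finset.mem_univ i)]
    congr 1
    · simp [hf]
    · exact Finset.prod_congr rfl fun j hj => by simp [hf, (Finset.mem_erase.mp hj).1]
  calc ∑ p₁ ∈ Finset.univ.filter (fun p₁ : ι → A => p₁ i = a),
        ∏ j ∈ Finset.univ.erase i, σ j p₀ s₁ (p₁ j)
      = ∑ p₁ : ι → A, (if p₁ i = a then (1:ℝ) else 0) *
          ∏ j ∈ Finset.univ.erase i, σ j p₀ s₁ (p₁ j) := by
        rw [Finset.sum_filter]
        exact Finset.sum_congr rfl fun p₁ _ => by split <;> simp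
    _ = ∑ p₁ ∈ Fintype.piFinset (fun _ : ι => (Finset.univ : Finset A)), ∏ j, f j (p₁ j) := by
        rw [Fintype.piFinset_univ]
        exact (Finset.sum_congr rfl fun p₁ _ => (h1 p₁).symm)
    _ = ∏ j, ∑ x, f j x := (Finset.prod_univ_sum _ _).symm
    _ = 1 := by
        apply Finset.prod_eq_one
        intro j _
        by_cases hj : j = i
        · simp [hf, hj]
        · simp only [hf, if_neg hj]; exact (hσ j).2 p₀ s₁

/-- contraction estimate for `Gfun` in `v` -/
lemma Gfun_sub_le (hP : IsKernel P) (σ : ι → (ι → A) → S → A → ℝ)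
    (hσ : ∀ j, IsPolicy (σ j)) (v w : ι → S → (ι → A) → ℝ)
    (i : ι) (s₁ : S) (p₀ : ι → A) (a : A) (hδi : 0 ≤ δ i) (D : ℝ) (hD0 : 0 ≤ D)
    (hD : ∀ s₂ p₁, |v i s₂ p₁ - w i s₂ p₁| ≤ D) :
    |Gfun P π δ σ v i s₁ p₀ a - Gfun P π δ σ w i s₁ p₀ a| ≤ δ i * D := by
  unfold Gfun
  rw [← Finset.sum_sub_distrib]
  have hterm : ∀ p₁ ∈ Finset.univ.filter (fun p₁ : ι → A => p₁ i = a),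
      |(∏ j ∈ Finset.univ.erase i, σ j p₀ s₁ (p₁ j)) *
          (π i p₁ s₁ + δ i * ∑ s₂, P p₁ s₁ s₂ * v i s₂ p₁) -
        (∏ j ∈ Finset.univ.erase i, σ j p₀ s₁ (p₁ j)) *
          (π i p₁ s₁ + δ i * ∑ s₂, P p₁ s₁ s₂ * w i s₂ p₁)|
      ≤ (∏ j ∈ Finset.univ.erase i, σ j p₀ s₁ (p₁ j)) * (δ i * D) := by
    intro p₁ _
    have hprod0 : 0 ≤ ∏ j ∈ Finset.univ.erase i, σ j p₀ s₁ (p₁ j) :=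
      Finset.prod_nonneg fun j _ => (hσ j).1 _ _ _
    have e : (∏ j ∈ Finset.univ.erase i, σ j p₀ s₁ (p₁ j)) *
          (π i p₁ s₁ + δ i * ∑ s₂, P p₁ s₁ s₂ * v i s₂ p₁) -
        (∏ j ∈ Finset.univ.erase i, σ j p₀ s₁ (p₁ j)) *
          (π i p₁ s₁ + δ i * ∑ s₂, P p₁ s₁ s₂ * w i s₂ p₁)
        = (∏ j ∈ Finset.univ.erase i, σ j p₀ s₁ (p₁ j)) *
          (δ i * ∑ s₂, P p₁ s₁ s₂ * (v i s₂ p₁ - w i s₂ p₁)) := by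
      have h' : ∑ s₂, P p₁ s₁ s₂ * (v i s₂ p₁ - w i s₂ p₁)
          = (∑ s₂, P p₁ s₁ s₂ * v i s₂ p₁) - ∑ s₂, P p₁ s₁ s₂ * w i s₂ p₁ := by
        rw [← Finset.sum_sub_distrib]
        exact Finset.sum_congr rfl fun _ _ => by ring
      rw [h']; ring
    rw [e, abs_mul, abs_mul]
    have hsum : |∑ s₂, P p₁ s₁ s₂ * (v i s₂ p₁ - w i s₂ p₁)| ≤ D := by
      calc |∑ s₂, P p₁ s₁ s₂ * (v i s₂ p₁ - w i s₂ p₁)|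
          ≤ ∑ s₂, |P p₁ s₁ s₂ * (v i s₂ p₁ - w i s₂ p₁)| := Finset.abs_sum_le_sum_abs _ _
        _ ≤ ∑ s₂, P p₁ s₁ s₂ * D := Finset.sum_le_sum fun s₂ _ => by
            rw [abs_mul, abs_of_nonneg (hP.1 _ _ _)]
            exact mul_le_mul_of_nonneg_left (hD s₂ p₁) (hP.1 _ _ _)
        _ = D := by rw [← Finset.sum_mul, hP.2, one_mul]
    rw [abs_of_nonneg hprod0, abs_of_nonneg hδi]
    exact mul_le_mul_of_nonneg_left (mul_le_mul_of_nonneg_left hsum hδi) hprod0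
  calc |∑ p₁ ∈ Finset.univ.filter (fun p₁ : ι → A => p₁ i = a),
        ((∏ j ∈ Finset.univ.erase i, σ j p₀ s₁ (p₁ j)) *
          (π i p₁ s₁ + δ i * ∑ s₂, P p₁ s₁ s₂ * v i s₂ p₁) -
        (∏ j ∈ Finset.univ.erase i, σ j p₀ s₁ (p₁ j)) *
          (π i p₁ s₁ + δ i * ∑ s₂, P p₁ s₁ s₂ * w i s₂ p₁))|
      ≤ ∑ p₁ ∈ Finset.univ.filter (fun p₁ : ι → A => p₁ i = a),
        |(∏ j ∈ Finset.univ.erase i, σ j p₀ s₁ (p₁ j)) *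
          (π i p₁ s₁ + δ i * ∑ s₂, P p₁ s₁ s₂ * v i s₂ p₁) -
        (∏ j ∈ Finset.univ.erase i, σ j p₀ s₁ (p₁ j)) *
          (π i p₁ s₁ + δ i * ∑ s₂, P p₁ s₁ s₂ * w i s₂ p₁)| := Finset.abs_sum_le_sum_abs _ _
    _ ≤ ∑ p₁ ∈ Finset.univ.filter (fun p₁ : ι → A => p₁ i = a),
        (∏ j ∈ Finset.univ.erase i, σ j p₀ s₁ (p₁ j)) * (δ i * D) :=
        Finset.sum_le_sum hterm
    _ = (∑ p₁ ∈ Finset.univ.filter (fun p₁ : ι → A => p₁ i = a),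
        ∏ j ∈ Finset.univ.erase i, σ j p₀ s₁ (p₁ j)) * (δ i * D) := by
        rw [Finset.sum_mul]
    _ = δ i * D := by rw [fiber_sum σ hσ i a p₀ s₁, one_mul]

lemma abs_sup'_sub {α : Type*} (s : Finset α) (H : s.Nonempty) (f g : α → ℝ) (C : ℝ)
    (h : ∀ a ∈ s, |f a - g a| ≤ C) : |s.sup' H f - s.sup' H g| ≤ C := by
  rw [abs_sub_le_iff]
  constructor
  · rw [sub_le_iff_le_add]
    apply Finset.sup'_le
    intro a ha
    have h2 := (abs_sub_le_iff.mp (h a ha)).1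
    have h3 := Finset.le_sup' g ha
    linarith
  · rw [sub_le_iff_le_add]
    apply Finset.sup'_le
    intro a ha
    have h2 := (abs_sub_le_iff.mp (h a ha)).2
    have h3 := Finset.le_sup' f ha
    linarith

lemma tendsto_sup'_of_tendsto {α : Type*} (s : Finset α) (H : s.Nonempty)
    (f : ℕ → α → ℝ) (g : α → ℝ)
    (h : ∀ a ∈ s, Tendsto (fun k => f k a) atTop (nhds (g a))) :
    Tendsto (fun k => s.sup' H (f k)) atTop (nhds (s.sup' H g)) := by
  rw [tendsto_iff_dist_tendsto_zero]
  apply squeeze_zero (fun k => dist_nonneg)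
    (g := fun k => ∑ a ∈ s, |f k a - g a|)
  · intro k
    rw [Real.dist_eq]
    apply abs_sup'_sub
    intro a ha
    exact Finset.single_le_sum (f := fun b => |f k b - g b|) (fun b _ => abs_nonneg _) ha
  · have h0 : ∀ a ∈ s, Tendsto (fun k => |f k a - g a|) atTop (nhds 0) := by
      intro a ha
      have := ((h a ha).sub (tendsto_const_nhds (x := g a))).abs
      simpa using this
    have hsum : Tendsto (fun k => ∑ a ∈ s, |f k a - g a|) atTop (nhds (∑ _a ∈ s, (0:ℝ))) :=
      tendsto_finset_sum s h0
    simpa using hsum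

end AuxGamma

/-- properties of the correspondence `Γ`: it is nonempty-, convex- and
closed-valued on `Σ₁`, and it has a closed graph. -/
theorem Gamma_properties
    {ι S A : Type*} [Fintype ι] [DecidableEq ι] [Nonempty ι]
    [Fintype S] [DecidableEq S] [Nonempty S]
    [Fintype A] [DecidableEq A] [Nonempty A]
    (P : (ι → A) → S → S → ℝ) (hP : IsKernel P)
    (π : ι → (ι → A) → S → ℝ)
    (δ : ι → ℝ) (hδ : ∀ i, 0 < δ i ∧ δ i < 1)
    (b : (ι → (ι → A) → S → A → ℝ) → (ι → S → (ι → A) → ℝ))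
    (hb : ∀ σ, (∀ j, IsPolicy (σ j)) → Tmap P π δ (b σ) σ = b σ) :
    (∀ σ, (∀ j, IsPolicy (σ j)) → (Gamma P π δ b σ).Nonempty) ∧
    (∀ σ, (∀ j, IsPolicy (σ j)) → Convex ℝ (Gamma P π δ b σ)) ∧
    (∀ σ, (∀ j, IsPolicy (σ j)) → IsClosed (Gamma P π δ b σ)) ∧
    (∀ (σseq τseq : ℕ → ι → (ι → A) → S → A → ℝ)
        (σ τ : ι → (ι → A) → S → A → ℝ),
      (∀ k, ∀ j, IsPolicy (σseq k j)) → (∀ j, IsPolicy (σ j)) →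
      Tendsto σseq atTop (nhds σ) → Tendsto τseq atTop (nhds τ) →
      (∀ k, τseq k ∈ Gamma P π δ b (σseq k)) →
      τ ∈ Gamma P π δ b σ) := by
  classical
  have hbeq : ∀ σ : ι → (ι → A) → S → A → ℝ, (∀ j, IsPolicy (σ j)) → ∀ i s₁ p₀,
      b σ i s₁ p₀ =
        Finset.univ.sup' Finset.univ_nonempty (Gfun P π δ σ (b σ) i s₁ p₀) := by
    intro σ hσ i s₁ p₀
    rw [← congrFun (congrFun (congrFun (hb σ hσ) i) s₁) p₀, Tmap_eq_sup']
  refine ⟨?_, ?_, ?_, ?_⟩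
  · -- nonempty
    intro σ hσ
    have hex : ∀ (i : ι) (s₁ : S) (p₀ : ι → A), ∃ a₀ : A,
        Finset.univ.sup' Finset.univ_nonempty (Gfun P π δ σ (b σ) i s₁ p₀)
          = Gfun P π δ σ (b σ) i s₁ p₀ a₀ := by
      intro i s₁ p₀
      obtain ⟨a₀, _, h⟩ := Finset.exists_mem_eq_sup' (Finset.univ_nonempty (α := A))
        (Gfun P π δ σ (b σ) i s₁ p₀)
      exact ⟨a₀, h⟩
    choose amax hamax using hex
    refine ⟨fun i p₀ s₁ a => if a = amax i s₁ p₀ then 1 else 0, ?_, ?_⟩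
    · intro j
      constructor
      · intro p₀ s₁ a; dsimp only; split <;> norm_num
      · intro p₀ s₁; simp
    · funext i s₁ p₀
      rw [V1_eq_sum, dirac_sum, hbeq σ hσ i s₁ p₀, hamax]
  · -- convex
    intro σ hσ τ hτ τ' hτ' t u ht hu htu
    refine ⟨?_, ?_⟩
    · intro j
      constructor
      · intro p₀ s₁ a
        have h1 := (hτ.1 j).1 p₀ s₁ a
        have h2 := (hτ'.1 j).1 p₀ s₁ a
        simp only [Pi.add_apply, Pi.smul_apply, smul_eq_mul]
        exact add_nonneg (mul_nonneg ht h1) (mul_nonneg hu h2)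
      · intro p₀ s₁
        simp only [Pi.add_apply, Pi.smul_apply, smul_eq_mul]
        rw [Finset.sum_add_distrib, ← Finset.mul_sum, ← Finset.mul_sum,
          (hτ.1 j).2, (hτ'.1 j).2]
        linarith
    · funext i s₁ p₀
      have e1 := congrFun (congrFun (congrFun hτ.2 i) s₁) p₀
      have e2 := congrFun (congrFun (congrFun hτ'.2 i) s₁) p₀
      rw [V1_eq_sum] at e1 e2
      rw [V1_eq_sum]
      simp only [Pi.add_apply, Pi.smul_apply, smul_eq_mul]
      have hc : ∑ a, (t * τ i p₀ s₁ a + u * τ' i p₀ s₁ a) * Gfun P π δ σ (b σ) i s₁ p₀ a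
          = t * ∑ a, τ i p₀ s₁ a * Gfun P π δ σ (b σ) i s₁ p₀ a
            + u * ∑ a, τ' i p₀ s₁ a * Gfun P π δ σ (b σ) i s₁ p₀ a := by
        rw [Finset.mul_sum, Finset.mul_sum, ← Finset.sum_add_distrib]
        exact Finset.sum_congr rfl fun a _ => by ring
      rw [hc, ← e1, ← e2]
      linear_combination (b σ i s₁ p₀) * htu.symm
  · -- closed
    intro σ hσ
    have hev : ∀ (j : ι) (p₀ : ι → A) (s₁ : S) (a : A),
        Continuous (fun τ : ι → (ι → A) → S → A → ℝ => τ j p₀ s₁ a) := by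
      intro j p₀ s₁ a
      exact (continuous_apply a).comp ((continuous_apply s₁).comp
        ((continuous_apply p₀).comp (continuous_apply j)))
    have hset : Gamma P π δ b σ =
        (⋂ j, ⋂ p₀, ⋂ s₁, ⋂ a, {τ : ι → (ι → A) → S → A → ℝ | 0 ≤ τ j p₀ s₁ a}) ∩
        ((⋂ j, ⋂ p₀, ⋂ s₁, {τ : ι → (ι → A) → S → A → ℝ | ∑ a, τ j p₀ s₁ a = 1}) ∩
        (⋂ i, ⋂ s₁, ⋂ p₀, {τ : ι → (ι → A) → S → A → ℝ |
          b σ i s₁ p₀ = V1 P π δ σ (τ i) (b σ) i s₁ p₀})) := by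
      ext τ
      simp only [Gamma, IsPolicy, Set.mem_setOf_eq, Set.mem_inter_iff, Set.mem_iInter,
        funext_iff]
      exact ⟨fun ⟨h1, h2⟩ => ⟨fun j p₀ s₁ a => (h1 j).1 p₀ s₁ a,
        fun j p₀ s₁ => (h1 j).2 p₀ s₁, h2⟩,
        fun ⟨h1, h2, h3⟩ => ⟨fun j => ⟨h1 j, h2 j⟩, h3⟩⟩
    rw [hset]
    refine IsClosed.inter ?_ (IsClosed.inter ?_ ?_)
    · exact isClosed_iInter fun j => isClosed_iInter fun p₀ => isClosed_iInter fun s₁ =>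
        isClosed_iInter fun a => isClosed_le continuous_const (hev j p₀ s₁ a)
    · exact isClosed_iInter fun j => isClosed_iInter fun p₀ => isClosed_iInter fun s₁ =>
        isClosed_eq (continuous_finset_sum _ fun a _ => hev j p₀ s₁ a) continuous_const
    · refine isClosed_iInter fun i => isClosed_iInter fun s₁ => isClosed_iInter fun p₀ =>
        isClosed_eq continuous_const ?_
      unfold V1
      apply continuous_finset_sum
      intro p₁ _
      exact ((hev i p₀ s₁ (p₁ i)).mul continuous_const).mul continuous_const
  · -- closed graph
    intro σseq τseq σ τ hσk hσpol hσt hτt hmem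
    have hσpt : ∀ (j : ι) (p₀ : ι → A) (s₁ : S) (a : A),
        Tendsto (fun k => σseq k j p₀ s₁ a) atTop (nhds (σ j p₀ s₁ a)) := by
      intro j p₀ s₁ a
      exact tendsto_pi_nhds.mp (tendsto_pi_nhds.mp (tendsto_pi_nhds.mp
        (tendsto_pi_nhds.mp hσt j) p₀) s₁) a
    have hτpt : ∀ (j : ι) (p₀ : ι → A) (s₁ : S) (a : A),
        Tendsto (fun k => τseq k j p₀ s₁ a) atTop (nhds (τ j p₀ s₁ a)) := by
      intro j p₀ s₁ a
      exact tendsto_pi_nhds.mp (tendsto_pi_nhds.mp (tendsto_pi_nhds.mp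
        (tendsto_pi_nhds.mp hτt j) p₀) s₁) a
    have hτpol : ∀ j, IsPolicy (τ j) := by
      intro j
      constructor
      · intro p₀ s₁ a
        exact ge_of_tendsto' (hτpt j p₀ s₁ a) (fun k => ((hmem k).1 j).1 p₀ s₁ a)
      · intro p₀ s₁
        have h1 : Tendsto (fun k => ∑ a, τseq k j p₀ s₁ a) atTop
            (nhds (∑ a, τ j p₀ s₁ a)) :=
          tendsto_finset_sum _ fun a _ => hτpt j p₀ s₁ a
        have h2 : Tendsto (fun k => ∑ a, τseq k j p₀ s₁ a) atTop (nhds 1) := by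
          rw [show (fun k => ∑ a, τseq k j p₀ s₁ a) = fun _ => (1:ℝ) from
            funext fun k => ((hmem k).1 j).2 p₀ s₁]
          exact tendsto_const_nhds
        exact tendsto_nhds_unique h1 h2
    set δm := Finset.univ.sup' Finset.univ_nonempty δ with hδmdef
    have hδm1 : δm < 1 := by
      rw [hδmdef, Finset.sup'_lt_iff]
      exact fun i _ => (hδ i).2
    have hδmle : ∀ i, δ i ≤ δm := fun i => Finset.le_sup' δ (Finset.mem_univ i)
    have hδm0 : 0 < 1 - δm := by linarith
    have hG : ∀ (i : ι) (s₁ : S) (p₀ : ι → A) (a : A),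
        Tendsto (fun k => Gfun P π δ (σseq k) (b σ) i s₁ p₀ a) atTop
          (nhds (Gfun P π δ σ (b σ) i s₁ p₀ a)) := by
      intro i s₁ p₀ a
      unfold Gfun
      apply tendsto_finset_sum
      intro p₁ _
      exact (tendsto_finset_prod _ fun j _ => hσpt j p₀ s₁ (p₁ j)).mul tendsto_const_nhds
    set E : ℕ → ℝ := fun k => (Finset.univ : Finset (ι × S × (ι → A))).sup'
      Finset.univ_nonempty (fun q =>
        |Finset.univ.sup' Finset.univ_nonempty (Gfun P π δ (σseq k) (b σ) q.1 q.2.1 q.2.2)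
          - b σ q.1 q.2.1 q.2.2|) with hEdef
    set M : ℕ → ℝ := fun k => (Finset.univ : Finset (ι × S × (ι → A))).sup'
      Finset.univ_nonempty (fun q =>
        |b (σseq k) q.1 q.2.1 q.2.2 - b σ q.1 q.2.1 q.2.2|) with hMdef
    have hMb : ∀ (k : ℕ) (i : ι) (s₂ : S) (p₁ : ι → A),
        |b (σseq k) i s₂ p₁ - b σ i s₂ p₁| ≤ M k := fun k i s₂ p₁ =>
      Finset.le_sup' (fun q : ι × S × (ι → A) =>
        |b (σseq k) q.1 q.2.1 q.2.2 - b σ q.1 q.2.1 q.2.2|) (Finset.mem_univ (i, s₂, p₁))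
    have hM0 : ∀ k, 0 ≤ M k := fun k =>
      le_trans (abs_nonneg _) (hMb k (Classical.arbitrary ι) (Classical.arbitrary S)
        (Classical.arbitrary (ι → A)))
    have hstepA : ∀ (k : ℕ) (i : ι) (s₁ : S) (p₀ : ι → A),
        |b (σseq k) i s₁ p₀ - b σ i s₁ p₀| ≤ δm * M k + E k := by
      intro k i s₁ p₀
      set X := Finset.univ.sup' Finset.univ_nonempty (Gfun P π δ (σseq k) (b σ) i s₁ p₀)
        with hX
      have h1 : |b (σseq k) i s₁ p₀ - X| ≤ δ i * M k := by
        rw [hbeq (σseq k) (hσk k) i s₁ p₀, hX]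
        apply abs_sup'_sub
        intro a _
        exact Gfun_sub_le P π δ hP (σseq k) (hσk k) (b (σseq k)) (b σ) i s₁ p₀ a
          (le_of_lt (hδ i).1) (M k) (hM0 k) (fun s₂ p₁ => hMb k i s₂ p₁)
      have h2 : |X - b σ i s₁ p₀| ≤ E k :=
        Finset.le_sup' (fun q : ι × S × (ι → A) =>
          |Finset.univ.sup' Finset.univ_nonempty (Gfun P π δ (σseq k) (b σ) q.1 q.2.1 q.2.2)
            - b σ q.1 q.2.1 q.2.2|) (Finset.mem_univ ((i, s₁, p₀) : ι × S × (ι → A)))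
      have h3 : δ i * M k ≤ δm * M k :=
        mul_le_mul_of_nonneg_right (hδmle i) (hM0 k)
      calc |b (σseq k) i s₁ p₀ - b σ i s₁ p₀|
          ≤ |b (σseq k) i s₁ p₀ - X| + |X - b σ i s₁ p₀| := abs_sub_le _ _ _
        _ ≤ δm * M k + E k := by linarith
    have hMB : ∀ k, M k ≤ δm * M k + E k := by
      intro k
      apply Finset.sup'_le
      rintro ⟨i, s₁, p₀⟩ _
      exact hstepA k i s₁ p₀
    have hME : ∀ k, M k ≤ E k / (1 - δm) := by
      intro k
      rw [le_div_iff₀ hδm0]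
      nlinarith [hMB k]
    have hE0 : Tendsto E atTop (nhds 0) := by
      have hq : ∀ q ∈ (Finset.univ : Finset (ι × S × (ι → A))),
          Tendsto (fun k =>
            |Finset.univ.sup' Finset.univ_nonempty (Gfun P π δ (σseq k) (b σ) q.1 q.2.1 q.2.2)
              - b σ q.1 q.2.1 q.2.2|) atTop (nhds 0) := by
        rintro ⟨i, s₁, p₀⟩ _
        have hs : Tendsto (fun k =>
            Finset.univ.sup' Finset.univ_nonempty (Gfun P π δ (σseq k) (b σ) i s₁ p₀))
            atTop (nhds (b σ i s₁ p₀)) := by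
          rw [hbeq σ hσpol i s₁ p₀]
          exact tendsto_sup'_of_tendsto _ _ _ _ (fun a _ => hG i s₁ p₀ a)
        have := (hs.sub (tendsto_const_nhds (x := b σ i s₁ p₀))).abs
        simpa using this
      have := tendsto_sup'_of_tendsto (Finset.univ : Finset (ι × S × (ι → A)))
        Finset.univ_nonempty _ (fun _ => (0:ℝ)) hq
      simpa [hEdef] using this
    have hM00 : Tendsto M atTop (nhds 0) := by
      have hE0' : Tendsto (fun k => E k / (1 - δm)) atTop (nhds 0) := by
        have := hE0.div_const (1 - δm)
        simpa using this
      exact squeeze_zero hM0 hME hE0'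
    have hbc : ∀ (i : ι) (s₂ : S) (p₁ : ι → A),
        Tendsto (fun k => b (σseq k) i s₂ p₁) atTop (nhds (b σ i s₂ p₁)) := by
      intro i s₂ p₁
      rw [tendsto_iff_dist_tendsto_zero]
      exact squeeze_zero (fun k => dist_nonneg)
        (fun k => by rw [Real.dist_eq]; exact hMb k i s₂ p₁) hM00
    refine ⟨hτpol, ?_⟩
    funext i s₁ p₀
    have lim2 : Tendsto (fun k => V1 P π δ (σseq k) (τseq k i) (b (σseq k)) i s₁ p₀)
        atTop (nhds (V1 P π δ σ (τ i) (b σ) i s₁ p₀)) := by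
      unfold V1
      apply tendsto_finset_sum
      intro p₁ _
      refine ((hτpt i p₀ s₁ (p₁ i)).mul
        (tendsto_finset_prod _ fun j _ => hσpt j p₀ s₁ (p₁ j))).mul ?_
      exact tendsto_const_nhds.add (Tendsto.const_mul _
        (tendsto_finset_sum _ fun s₂ _ => Tendsto.const_mul _ (hbc i s₂ p₁)))
    have heqk : ∀ k, V1 P π δ (σseq k) (τseq k i) (b (σseq k)) i s₁ p₀
        = b (σseq k) i s₁ p₀ :=
      fun k => (congrFun (congrFun (congrFun (hmem k).2 i) s₁) p₀).symm
    have lim1 : Tendsto (fun k => V1 P π δ (σseq k) (τseq k i) (b (σseq k)) i s₁ p₀)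
        atTop (nhds (b σ i s₁ p₀)) := by
      rw [tendsto_congr heqk]
      exact hbc i s₁ p₀
    exact tendsto_nhds_unique lim1 lim2
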